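/- arXiv:2102.07946 — 6 statements merged into one kernel-verified Lean document; each statement's English description precedes it below -/
import Mathlib

section
/- Let p be a prime, n ≥ 1 an integer with p ∤ n, and a = i/n ∈ ℚ with 0 < a ≤ 1 (so 0 < i ≤ n). Let m ≥ 1 satisfy p^m ≡ 1 (mod n). Then the m-th iterated Dwork prime of a (viewed as an element of ℤ_p) equals a: a^{(m)} = a. -/
/-!
Write `α = j / n` with `0 < j ≤ n`. If `α + k = p β` with `0 ≤ k < p`, then `p (n β) = j + n k`
is a natural number divisible by `p`, so `β = j' / n` with `p j' = j + n k`; hence again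
`0 < j' ≤ n`, and `p j' ≡ j (mod n)`. After `m` steps the numerator `c` satisfies
`p ^ m c ≡ i`, so `c ≡ i (mod n)` when `p ^ m ≡ 1`, and both lying in `(0, n]` forces `c = i`.
-/

namespace PadicInt

variable {p : ℕ} [Fact p.Prime]

theorem prime_dvd_of_natCast_eq_p_mul {N : ℕ} {x : ℤ_[p]} (h : (N : ℤ_[p]) = p * x) : p ∣ N := by
  have := congrArg toZMod h
  rwa [map_natCast, map_mul, map_natCast, ZMod.natCast_self, zero_mul,
    ZMod.natCast_eq_zero_iff] at this

theorem exists_numerator_of_add_eq_p_mul {n i k : ℕ} {α β : ℤ_[p]}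
    (hi0 : 0 < i) (hin : i ≤ n) (hk : k < p)
    (hα : (n : ℤ_[p]) * α = i) (hβ : α + k = p * β) :
    ∃ j : ℕ, 0 < j ∧ j ≤ n ∧ (n : ℤ_[p]) * β = j ∧ p * j ≡ i [MOD n] := by
  have hnβ : ((i + n * k : ℕ) : ℤ_[p]) = p * (n * β) := by
    push_cast
    linear_combination (n : ℤ_[p]) * hβ - hα
  obtain ⟨j, hj⟩ := prime_dvd_of_natCast_eq_p_mul hnβ
  have hp : (p : ℤ_[p]) ≠ 0 := Nat.cast_ne_zero.mpr (Fact.out : p.Prime).ne_zero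
  refine ⟨j, by nlinarith, by nlinarith, ?_, ?_⟩
  · apply mul_left_cancel₀ hp
    rw [← hnβ, hj, Nat.cast_mul]
  · rw [Nat.ModEq, ← hj, Nat.add_mul_mod_self_left]

theorem exists_numerator_iterate {dw : ℤ_[p] → ℤ_[p]}
    (hdw : ∀ α : ℤ_[p], ∃ k : ℕ, k < p ∧ α + (k : ℤ_[p]) = (p : ℤ_[p]) * dw α)
    {n i : ℕ} (hi0 : 0 < i) (hin : i ≤ n) {a : ℤ_[p]} (ha : (n : ℤ_[p]) * a = i) (m : ℕ) :
    ∃ c : ℕ, 0 < c ∧ c ≤ n ∧ (n : ℤ_[p]) * dw^[m] a = c ∧ p ^ m * c ≡ i [MOD n] := by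
  induction m with
  | zero => exact ⟨i, hi0, hin, ha, by rw [pow_zero, one_mul]⟩
  | succ m ih =>
    obtain ⟨c, hc0, hcn, hc, hcong⟩ := ih
    obtain ⟨k, hk, hkβ⟩ := hdw (dw^[m] a)
    obtain ⟨c', hc'0, hc'n, hc', hc'cong⟩ := exists_numerator_of_add_eq_p_mul hc0 hcn hk hc hkβ
    refine ⟨c', hc'0, hc'n, by rwa [Function.iterate_succ_apply'], ?_⟩
    calc p ^ (m + 1) * c' = p ^ m * (p * c') := by ring
      _ ≡ p ^ m * c [MOD n] := hc'cong.mul_left _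
      _ ≡ i [MOD n] := hcong

end PadicInt

theorem dwork_prime_iterate_fixes_general (p : ℕ) [Fact p.Prime]
    (dw : ℤ_[p] → ℤ_[p])
    (hdw : ∀ α : ℤ_[p], ∃ k : ℕ, k < p ∧ α + (k : ℤ_[p]) = (p : ℤ_[p]) * dw α)
    (n : ℕ)
    (i : ℕ) (hi0 : 0 < i) (hin : i ≤ n)
    (m : ℕ) (hpm : p ^ m ≡ 1 [MOD n])
    (a : ℤ_[p]) (ha : (n : ℤ_[p]) * a = (i : ℤ_[p])) :
    dw^[m] a = a := by
  obtain ⟨c, hc0, hcn, hc, hcong⟩ := PadicInt.exists_numerator_iterate hdw hi0 hin ha m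
  have hci : c ≡ i [MOD n] := by
    simpa using (hpm.mul_right c).symm.trans hcong
  have hc_eq : c = i := hci.eq_of_abs_lt (abs_sub_lt_iff.mpr ⟨by omega, by omega⟩)
  have hn : (n : ℤ_[p]) ≠ 0 := Nat.cast_ne_zero.mpr (by omega)
  apply mul_left_cancel₀ hn
  rw [hc, hc_eq, ha]

/-- Let `p` be a prime, `n ≥ 1` with `p ∤ n`, and `a = i/n ∈ ℚ`
with `0 < i ≤ n`, regarded as an element of `ℤ_p`. Let `dw : ℤ_p → ℤ_p` be the
Dwork prime operation (characterized by: for every `α` there is `k ∈ {0,…,p−1}`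
with `α + k = p·(dw α)`). If `m ≥ 1` satisfies `p^m ≡ 1 (mod n)`, then the `m`-th
iterate of the Dwork prime fixes `a`: `dw^[m] a = a`. -/
theorem dwork_prime_iterate_fixes (p : ℕ) [Fact p.Prime]
    (dw : ℤ_[p] → ℤ_[p])
    (hdw : ∀ α : ℤ_[p], ∃ k : ℕ, k < p ∧ α + (k : ℤ_[p]) = (p : ℤ_[p]) * dw α)
    (n : ℕ) (hn : 1 ≤ n) (hpn : ¬ (p ∣ n))
    (i : ℕ) (hi0 : 0 < i) (hin : i ≤ n)
    (m : ℕ) (hm : 1 ≤ m) (hpm : p ^ m ≡ 1 [MOD n])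
    (a : ℤ_[p]) (ha : (n : ℤ_[p]) * a = (i : ℤ_[p])) :
    dw^[m] a = a :=
  dwork_prime_iterate_fixes_general p dw hdw n i hi0 hin m hpm a ha
end

section
/- For every prime p and every z ∈ ℤ_p, the limit ψ̃_p(z) := lim_{n → z} Σ_{1 ≤ k < n, p ∤ k} 1/k exists in ℤ_p, where the limit is over positive integers n converging p-adically to z. Equivalently, the function n ↦ Σ_{1 ≤ k < n, p∤k} 1/k on positive integers is uniformly continuous for the p-adic metric and hence extends continuously to ℤ_p. -/
/-!
Write `H(n) = ∑_{k < n, p ∤ k} 1/k ∈ ℤ_p`. Modulo `p ^ j`, the terms over a full period of `k` run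
through the inverses of the units of `ZMod (p ^ j)`, i.e. through the units themselves, whose sum is
killed by `2` since `u ↦ -u` permutes them. Hence `2 H(a) ≡ 2 H(b) mod p ^ j` whenever
`a ≡ b mod p ^ j`: `H` is Lipschitz with constant `‖2‖⁻¹` for the `p`-adic metric on `ℕ`, and so
extends continuously from the dense subset `ℕ` to the complete space `ℤ_p`.
-/

open Finset

section Units

variable {R : Type*} [Ring R]

theorem two_mul_sum_units_eq_zero [Fintype Rˣ] : 2 * ∑ u : Rˣ, (u : R) = 0 := by
  have hneg := Equiv.sum_comp (Equiv.neg Rˣ) ((↑) : Rˣ → R)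
  simp only [Equiv.neg_apply, Units.val_neg, sum_neg_distrib] at hneg
  rw [two_mul]
  nth_rewrite 1 [← hneg]
  exact neg_add_cancel _

theorem sum_ringInverse_eq_sum_units [Fintype R] [Fintype Rˣ] :
    ∑ x : R, Ring.inverse x = ∑ u : Rˣ, (u : R) := by
  calc ∑ x : R, Ring.inverse x
      = ∑ x ∈ univ.map ⟨((↑) : Rˣ → R), Units.val_injective⟩, Ring.inverse x := by
        refine (sum_subset (subset_univ _) fun x _ hx => Ring.inverse_non_unit x ?_).symm
        rintro ⟨u, rfl⟩
        exact hx (mem_map_of_mem _ (mem_univ u))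
    _ = ∑ u : Rˣ, ((u⁻¹ : Rˣ) : R) := by
        simp only [sum_map, Function.Embedding.coeFn_mk, Ring.inverse_unit]
    _ = ∑ u : Rˣ, (u : R) := Equiv.sum_comp (Equiv.inv Rˣ) ((↑) : Rˣ → R)

end Units

namespace ZMod

variable {M : Type*} [AddCommMonoid M] {m : ℕ} [NeZero m]

theorem sum_range_natCast (f : ZMod m → M) : ∑ k ∈ range m, f k = ∑ x, f x :=
  sum_nbij' (↑) ZMod.val (fun _ _ => mem_univ _) (fun x _ => mem_range.2 x.val_lt)
    (fun _ hk => val_cast_of_lt (mem_range.1 hk)) (fun x _ => natCast_zmod_val x) fun _ _ => rfl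

theorem sum_range_add_mul (f : ZMod m → M) (b t : ℕ) :
    ∑ k ∈ range (b + t * m), f k = ∑ k ∈ range b, f k + t • ∑ x, f x := by
  induction t with
  | zero => simp
  | succ t ih =>
    have hperiod : ∑ k ∈ range m, f ((b + t * m + k : ℕ) : ZMod m) = ∑ x, f x := by
      simp only [Nat.cast_add (b + t * m)]
      rw [sum_range_natCast (fun x => f (((b + t * m : ℕ) : ZMod m) + x))]
      exact Equiv.sum_comp (Equiv.addLeft _) f
    rw [add_mul, one_mul, ← add_assoc, sum_range_add, ih, hperiod, add_smul, one_smul, add_assoc]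

theorem two_mul_sum_range_ringInverse_mod (a : ℕ) :
    2 * ∑ k ∈ range a, Ring.inverse (k : ZMod m) =
      2 * ∑ k ∈ range (a % m), Ring.inverse (k : ZMod m) := by
  conv_lhs => rw [← Nat.mod_add_div' a m]
  rw [sum_range_add_mul, sum_ringInverse_eq_sum_units, mul_add, mul_smul_comm,
    two_mul_sum_units_eq_zero, smul_zero, add_zero]

theorem two_mul_sum_range_ringInverse_eq {a b : ℕ} (h : a ≡ b [MOD m]) :
    2 * ∑ k ∈ range a, Ring.inverse (k : ZMod m) =
      2 * ∑ k ∈ range b, Ring.inverse (k : ZMod m) := by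
  rw [two_mul_sum_range_ringInverse_mod a, two_mul_sum_range_ringInverse_mod b,
    show a % m = b % m from h]

end ZMod

theorem map_ringInverse {M₀ N₀ F : Type*} [MonoidWithZero M₀] [MonoidWithZero N₀]
    [FunLike F M₀ N₀] [MonoidWithZeroHomClass F M₀ N₀] (f : F) {x : M₀}
    (hx : IsUnit (f x) → IsUnit x) : f (Ring.inverse x) = Ring.inverse (f x) := by
  by_cases hunit : IsUnit x
  · obtain ⟨u, rfl⟩ := hunit
    rw [Ring.inverse_unit]
    exact (Ring.inverse_unit (Units.map (f : M₀ →* N₀) u)).symm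
  · rw [Ring.inverse_non_unit x hunit, Ring.inverse_non_unit _ (mt hx hunit), map_zero]

namespace PadicInt

variable {p : ℕ} [hp : Fact p.Prime]

theorem isUnit_natCast_iff {k : ℕ} : IsUnit (k : ℤ_[p]) ↔ ¬p ∣ k := by
  rw [isUnit_iff, norm_natCast_eq_one_iff, hp.out.coprime_iff_not_dvd]

theorem toZModPow_ringInverse_natCast (n k : ℕ) :
    toZModPow n (Ring.inverse (k : ℤ_[p])) = Ring.inverse (k : ZMod (p ^ n)) := by
  cases n with
  | zero => exact @Subsingleton.elim _ (ZMod.subsingleton_iff.2 (pow_zero p)) _ _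
  | succ n =>
    rw [map_ringInverse _ fun hunit => ?_, map_natCast]
    rwa [map_natCast, ZMod.isUnit_iff_coprime, Nat.coprime_pow_right_iff n.succ_pos,
      Nat.coprime_comm, hp.out.coprime_iff_not_dvd, ← isUnit_natCast_iff] at hunit

theorem norm_le_norm_of_toZModPow {x y : ℤ_[p]}
    (h : ∀ n, toZModPow n x = 0 → toZModPow n y = 0) : ‖y‖ ≤ ‖x‖ := by
  have hpow (n : ℕ) : ‖x‖ ≤ (p : ℝ) ^ (-n : ℤ) → ‖y‖ ≤ (p : ℝ) ^ (-n : ℤ) := by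
    simpa only [norm_le_pow_iff_mem_span_pow, ← ker_toZModPow, RingHom.mem_ker] using h n
  rcases eq_or_ne y 0 with rfl | hy
  · simp
  rcases eq_or_ne x 0 with rfl | hx
  · have := hpow (y.valuation + 1) (by simp only [norm_zero]; positivity)
    rw [norm_le_pow_iff_le_valuation y hy] at this
    omega
  · rw [norm_eq_zpow_neg_valuation hx] at hpow ⊢
    exact hpow _ le_rfl

theorem coe_ringInverse_natCast (k : ℕ) :
    ((Ring.inverse (k : ℤ_[p]) : ℤ_[p]) : ℚ_[p]) = if p ∣ k then 0 else (k : ℚ_[p])⁻¹ := by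
  split_ifs with hk
  · rw [Ring.inverse_non_unit _ (mt isUnit_natCast_iff.1 (not_not.2 hk))]
    rfl
  · apply eq_inv_of_mul_eq_one_left
    rw [← coe_natCast, ← coe_mul, Ring.inverse_mul_cancel _ (isUnit_natCast_iff.2 hk)]
    rfl

/-- `Ring.inverse` vanishes on non-units, so the multiples of `p` contribute nothing. -/
noncomputable def unitHarmonic (p : ℕ) [Fact p.Prime] (n : ℕ) : ℤ_[p] :=
  ∑ k ∈ range n, Ring.inverse (k : ℤ_[p])

theorem coe_unitHarmonic (n : ℕ) :
    (unitHarmonic p n : ℚ_[p]) =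
      ∑ k ∈ (Ico 1 n).filter (fun k => ¬p ∣ k), (k : ℚ_[p])⁻¹ := by
  have hfilter : (range n).filter (fun k => ¬p ∣ k) = (Ico 1 n).filter (fun k => ¬p ∣ k) := by
    ext k
    simp only [mem_filter, mem_range, mem_Ico]
    constructor
    · rintro ⟨hk, hdvd⟩
      exact ⟨⟨Nat.pos_of_ne_zero (by rintro rfl; exact hdvd (dvd_zero p)), hk⟩, hdvd⟩
    · rintro ⟨⟨_, hk⟩, hdvd⟩
      exact ⟨hk, hdvd⟩
  simp only [unitHarmonic, coe_sum, coe_ringInverse_natCast]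
  rw [← hfilter, sum_filter]
  exact sum_congr rfl fun k _ => ite_not _ _ _ |>.symm

theorem dist_unitHarmonic_le (a b : ℕ) :
    dist (unitHarmonic p a) (unitHarmonic p b) ≤ ‖(2 : ℤ_[p])‖⁻¹ * dist (a : ℤ_[p]) b := by
  have htwo : ‖2 * (unitHarmonic p a - unitHarmonic p b)‖ ≤ ‖(a : ℤ_[p]) - b‖ := by
    refine norm_le_norm_of_toZModPow fun n hab => ?_
    have : NeZero (p ^ n) := ⟨pow_ne_zero n hp.out.ne_zero⟩
    rw [map_sub, map_natCast, map_natCast, sub_eq_zero, ZMod.natCast_eq_natCast_iff] at hab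
    simp only [mul_sub, map_sub, map_mul, map_ofNat, unitHarmonic, map_sum,
      toZModPow_ringInverse_natCast]
    rw [ZMod.two_mul_sum_range_ringInverse_eq hab, sub_self]
  rw [dist_eq_norm, dist_eq_norm, le_inv_mul_iff₀ (norm_pos_iff.2 two_ne_zero), ← norm_mul]
  exact htwo

theorem exists_continuous_extend_natCast {E : Type*} [MetricSpace E] [CompleteSpace E]
    {f : ℕ → E} (K : NNReal) (hf : ∀ a b : ℕ, dist (f a) (f b) ≤ K * dist (a : ℤ_[p]) b) :
    ∃ F : ℤ_[p] → E, Continuous F ∧ ∀ n : ℕ, F n = f n := by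
  let e := Equiv.ofInjective ((↑) : ℕ → ℤ_[p]) Nat.cast_injective
  have hlip : LipschitzWith K (f ∘ e.symm) := LipschitzWith.of_dist_le_mul fun x y => by
    obtain ⟨a, rfl⟩ := e.surjective x
    obtain ⟨b, rfl⟩ := e.surjective y
    simp only [Function.comp_apply, e.symm_apply_apply]
    exact hf a b
  refine ⟨denseRange_natCast.extend (f ∘ e.symm),
    (denseRange_natCast.uniformContinuous_extend hlip.uniformContinuous).continuous, fun n => ?_⟩
  exact (denseRange_natCast.extend_of_ind hlip.uniformContinuous (e n)).trans
    (congrArg f (e.symm_apply_apply n))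

end PadicInt

/-- For every prime `p`, the function
`n ↦ Σ_{1 ≤ k < n, p ∤ k} 1/k` on positive integers extends to a continuous
function `ψ̃_p : ℤ_p → ℚ_p` with values in `ℤ_p` (all values of norm ≤ 1);
i.e. the limit `ψ̃_p(z) = lim_{n → z} Σ_{1 ≤ k < n, p ∤ k} 1/k` exists in `ℤ_p`
for every `z ∈ ℤ_p`. -/
theorem padic_polygamma_exists (p : ℕ) [Fact p.Prime] :
    ∃ ψ : ℤ_[p] → ℚ_[p], Continuous ψ ∧ (∀ z : ℤ_[p], ‖ψ z‖ ≤ 1) ∧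
      ∀ n : ℕ, 0 < n →
        ψ (n : ℤ_[p]) =
          ∑ k ∈ (Finset.Ico 1 n).filter (fun k => ¬ (p ∣ k)), ((k : ℚ_[p]))⁻¹ := by
  obtain ⟨ψ, hψ, hψ_nat⟩ := PadicInt.exists_continuous_extend_natCast ‖(2 : ℤ_[p])‖₊⁻¹
    fun a b => by simpa using PadicInt.dist_unitHarmonic_le (p := p) a b
  refine ⟨fun z => (ψ z : ℚ_[p]), continuous_subtype_val.comp hψ, fun z => (ψ z).norm_le_one,
    fun n _ => ?_⟩
  show ((ψ n : ℤ_[p]) : ℚ_[p]) = _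
  rw [hψ_nat, PadicInt.coe_unitHarmonic]
end

section
/- Let K be a field of characteristic zero, a_0,…,a_d ∈ K, and set ǎ_i = 1 − a_i. Let s_1,…,s_{d+1} be the elementary symmetric functions defined by (T+a_0)⋯(T+a_d) = T^{d+1} + s_1 T^d + ⋯ + s_{d+1}, and put q_{d−m} := −s_{m+1}·t/(1−t) for m = 0,…,d. Define the differential operator P := D^{d+1} − D^d∘q_d + ⋯ + (−1)^d D∘q_1 + (−1)^{d+1} q_0 acting on K[[t]][1/(1−t)] (where D∘q means first multiply by q, then apply D = t·d/dt). Then P∘(1−t) = P_{HG,ǎ}, i.e., for every y, P((1−t)·y) = D^{d+1}y − t·(D+1−a_0)⋯(D+1−a_d)y. In particular y_d := (1−t)·F_{ǎ}(t) satisfies P(y_d) = 0, where F_{ǎ} is the hypergeometric series with parameters (1−a_0,…,1−a_d). -/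
open PowerSeries

/-- The operator `D = t·d/dt` on formal power series. -/
noncomputable def thetaOp (K : Type*) [Field K] (f : K⟦X⟧) : K⟦X⟧ :=
  PowerSeries.mk fun n => (n : K) * PowerSeries.coeff n f

/-- The operator `D + a`. -/
noncomputable def shiftOp (K : Type*) [Field K] (a : K) (f : K⟦X⟧) : K⟦X⟧ :=
  thetaOp K f + a • f

/-- The hypergeometric power series. -/
noncomputable def hgSeries (K : Type*) [Field K] {d : ℕ} (a : Fin (d + 1) → K) : K⟦X⟧ :=
  PowerSeries.mk fun n => ∏ i : Fin (d + 1),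
    (Polynomial.eval (a i) (ascPochhammer K n) / (Nat.factorial n))

/-! `D tⁿ = n tⁿ`, so every operator in sight acts diagonally on coefficients: `(D+b₀)⋯(D+b_d)`
multiplies the `n`-th coefficient by `∏ (n + bᵢ)` and equals `Σ cⱼ Dʲ` whenever
`∏ (x + bᵢ) = Σ cⱼ xʲ`. Since `qⱼ·(1−t) = −s_{d+1−j}·t`, the operator `P∘(1−t)` is
`D^{d+1} − (Σⱼ (−1)^{d+1−j} s_{d+1−j} Dʲ)∘t`; by Vieta that sum is `∏ (D − aᵢ)`, and
`(D − a)∘t = t∘(D + 1 − a)`. The series `F_ǎ` is annihilated by `D^{d+1} − t∏(D + ǎᵢ)` because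
its coefficients satisfy `(n+1)^{d+1} F_{n+1} = ∏ (n + ǎᵢ) F_n`. -/

namespace HypergeometricOperator

section Vieta

variable {R : Type*} [CommRing R] {n : ℕ} (a : Fin n → R) (s : ℕ → R)

theorem eq_one_of_prod_X_add_C_eq
    (hs : ∏ i, (Polynomial.X + Polynomial.C (a i)) =
      ∑ m ∈ Finset.range (n + 1), Polynomial.C (s m) * Polynomial.X ^ (n - m)) :
    s 0 = 1 := by
  nontriviality R
  have hmonic : (∏ i, (Polynomial.X + Polynomial.C (a i))).Monic :=
    Polynomial.monic_prod_of_monic _ _ fun i _ => Polynomial.monic_X_add_C (a i)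
  have hdeg : (∏ i, (Polynomial.X + Polynomial.C (a i))).natDegree = n := by
    rw [Polynomial.natDegree_prod_of_monic _ _ fun i _ => Polynomial.monic_X_add_C (a i)]
    simp
  have hlead := hmonic.coeff_natDegree
  rw [hdeg, hs, Polynomial.finsetSum_coeff, Finset.sum_eq_single 0] at hlead
  · simpa using hlead
  · intro m hm hm0
    rw [Polynomial.coeff_C_mul_X_pow, if_neg (by grind)]
  · simp

theorem prod_sub_eq_sum_of_prod_X_add_C_eq
    (hs : ∏ i, (Polynomial.X + Polynomial.C (a i)) =
      ∑ m ∈ Finset.range (n + 1), Polynomial.C (s m) * Polynomial.X ^ (n - m)) (x : R) :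
    ∏ i, (x - a i) = ∑ j ∈ Finset.range (n + 1), (-1) ^ (n - j) * s (n - j) * x ^ j := by
  have h := congrArg (Polynomial.eval (-x)) hs
  simp only [Polynomial.eval_prod, Polynomial.eval_add, Polynomial.eval_X, Polynomial.eval_C,
    Polynomial.eval_finsetSum, Polynomial.eval_mul, Polynomial.eval_pow] at h
  calc ∏ i, (x - a i) = (-1) ^ n * ∏ i, (-x + a i) := by
        rw [← Fin.prod_const, ← Finset.prod_mul_distrib]
        exact Finset.prod_congr rfl fun i _ => by ring
    _ = ∑ m ∈ Finset.range (n + 1), (-1) ^ n * s m * (-x) ^ (n - m) := by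
        rw [h, Finset.mul_sum]
        exact Finset.sum_congr rfl fun m _ => by ring
    _ = _ := by
        rw [← Finset.sum_range_reflect]
        refine Finset.sum_congr rfl fun j hj => ?_
        have hj : j ≤ n := Nat.lt_succ_iff.mp (Finset.mem_range.mp hj)
        have hsign : (-1 : R) ^ n = (-1) ^ (n - j) * (-1) ^ j := by
          rw [← pow_add, Nat.sub_add_cancel hj]
        have hsq : (-1 : R) ^ j * (-1) ^ j = 1 := by rw [← mul_pow, neg_one_mul, neg_neg, one_pow]
        rw [add_tsub_cancel_right, Nat.sub_sub_self hj, neg_pow x, hsign]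
        linear_combination (-1) ^ (n - j) * s (n - j) * x ^ j * hsq

end Vieta

section ThetaOp

variable {K : Type*} [Field K]

theorem coeff_thetaOp (n : ℕ) (f : K⟦X⟧) : coeff n (thetaOp K f) = n * coeff n f :=
  coeff_mk _ _

theorem coeff_thetaOp_iterate (j n : ℕ) (f : K⟦X⟧) :
    coeff n ((thetaOp K)^[j] f) = (n : K) ^ j * coeff n f := by
  induction j with
  | zero => simp
  | succ j ih =>
    rw [Function.iterate_succ_apply', coeff_thetaOp, ih, pow_succ, mul_comm _ (n : K), mul_assoc]

theorem coeff_shiftOp (b : K) (n : ℕ) (f : K⟦X⟧) :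
    coeff n (shiftOp K b f) = (n + b) * coeff n f := by
  rw [shiftOp, map_add, coeff_thetaOp, map_smul, smul_eq_mul, add_mul]

theorem coeff_foldr_shiftOp {m : ℕ} (b : Fin m → K) (n : ℕ) (f : K⟦X⟧) :
    coeff n ((List.ofFn fun i => shiftOp K (b i)).foldr (· ∘ ·) id f) =
      (∏ i, ((n : K) + b i)) * coeff n f := by
  induction m with
  | zero => simp
  | succ m ih =>
    rw [List.ofFn_succ, List.foldr_cons, Function.comp_apply, coeff_shiftOp, ih, Fin.prod_univ_succ,
      mul_assoc]

theorem shiftOp_X_mul (b : K) (f : K⟦X⟧) : shiftOp K b (X * f) = X * shiftOp K (b + 1) f := by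
  ext (_ | n)
  · simp [coeff_shiftOp]
  · rw [coeff_shiftOp, coeff_succ_X_mul, coeff_succ_X_mul, coeff_shiftOp]
    push_cast
    ring

theorem foldr_shiftOp_X_mul {m : ℕ} (b : Fin m → K) (f : K⟦X⟧) :
    (List.ofFn fun i => shiftOp K (b i)).foldr (· ∘ ·) id (X * f) =
      X * (List.ofFn fun i => shiftOp K (b i + 1)).foldr (· ∘ ·) id f := by
  induction m with
  | zero => simp
  | succ m ih => simp only [List.ofFn_succ, List.foldr_cons, Function.comp_apply, ih, shiftOp_X_mul]

theorem foldr_shiftOp_eq_sum {m N : ℕ} (b : Fin m → K) (c : ℕ → K)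
    (hc : ∀ x : K, ∏ i, (x + b i) = ∑ j ∈ Finset.range N, c j * x ^ j) (f : K⟦X⟧) :
    (List.ofFn fun i => shiftOp K (b i)).foldr (· ∘ ·) id f =
      ∑ j ∈ Finset.range N, c j • (thetaOp K)^[j] f := by
  ext n
  simp only [coeff_foldr_shiftOp, hc, map_sum, map_smul, coeff_thetaOp_iterate, smul_eq_mul,
    Finset.sum_mul, mul_assoc]

end ThetaOp

section HgSeries

variable {K : Type*} [Field K] [CharZero K] {d : ℕ}

theorem coeff_succ_hgSeries (b : Fin (d + 1) → K) (m : ℕ) :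
    ((m + 1 : ℕ) : K) ^ (d + 1) * coeff (m + 1) (hgSeries K b) =
      (∏ i, ((m : K) + b i)) * coeff m (hgSeries K b) := by
  simp only [hgSeries, coeff_mk]
  rw [← Fin.prod_const, ← Finset.prod_mul_distrib, ← Finset.prod_mul_distrib]
  refine Finset.prod_congr rfl fun i _ => ?_
  have hm : (m.factorial : K) ≠ 0 := Nat.cast_ne_zero.mpr m.factorial_ne_zero
  rw [ascPochhammer_succ_eval, Nat.factorial_succ, Nat.cast_mul]
  field_simp
  ring

theorem thetaOp_iterate_hgSeries (b : Fin (d + 1) → K) :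
    (thetaOp K)^[d + 1] (hgSeries K b) =
      X * (List.ofFn fun i => shiftOp K (b i)).foldr (· ∘ ·) id (hgSeries K b) := by
  ext (_ | m)
  · rw [coeff_thetaOp_iterate, coeff_zero_X_mul]; simp
  · rw [coeff_thetaOp_iterate, coeff_succ_X_mul, coeff_foldr_shiftOp, coeff_succ_hgSeries]

end HgSeries

end HypergeometricOperator

open HypergeometricOperator in
/-- With `s₁,…,s_{d+1}` the elementary symmetric functions of the `aᵢ`
(via `(T+a₀)⋯(T+a_d) = Σ_m s_m T^{d+1−m}`, `s₀ = 1`) and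
`q_{d−m} = −s_{m+1}·t/(1−t)`, the operator
`P = D^{d+1} − D^d∘q_d + ⋯ + (−1)^d D∘q₁ + (−1)^{d+1} q₀` satisfies
`P((1−t)·y) = D^{d+1}y − t·(D+1−a₀)⋯(D+1−a_d)y` for all `y`; in particular
`y_d := (1−t)·F_ǎ(t)` (with `ǎᵢ = 1−aᵢ`) satisfies `P(y_d) = 0`.
(Here `1−t` is a unit of `K[[t]]`, with inverse `inv1t`.) -/
theorem operator_P_comp_one_sub_t
    (K : Type*) [Field K] [CharZero K] (d : ℕ) (a : Fin (d + 1) → K)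
    (s : ℕ → K)
    (hs : (∏ i : Fin (d + 1), (Polynomial.X + Polynomial.C (a i))) =
      ∑ m ∈ Finset.range (d + 2), Polynomial.C (s m) * Polynomial.X ^ (d + 1 - m))
    (inv1t : K⟦X⟧) (hinv : (1 - PowerSeries.X) * inv1t = 1)
    (q : ℕ → K⟦X⟧)
    (hq : ∀ j, j ≤ d →
      q j = -(PowerSeries.C (s (d - j + 1)) * PowerSeries.X * inv1t))
    (P : K⟦X⟧ → K⟦X⟧)
    (hP : ∀ y, P y = (thetaOp K)^[d + 1] y +
      ∑ j ∈ Finset.range (d + 1), ((-1 : K) ^ (d + 1 - j)) • (thetaOp K)^[j] (q j * y)) :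
    (∀ y : K⟦X⟧,
      P ((1 - PowerSeries.X) * y) =
        (thetaOp K)^[d + 1] y -
          PowerSeries.X *
            ((List.ofFn fun i : Fin (d + 1) => shiftOp K (1 - a i)).foldr (· ∘ ·) id) y) ∧
    P ((1 - PowerSeries.X) * hgSeries K (fun i => 1 - a i)) = 0 := by
  have hs0 : s 0 = 1 := eq_one_of_prod_X_add_C_eq a s hs
  have hsymbol : ∀ x : K, ∏ i, (x + -a i) =
      ∑ j ∈ Finset.range (d + 2), (-1) ^ (d + 1 - j) * s (d + 1 - j) * x ^ j := by
    simpa only [← sub_eq_add_neg] using prod_sub_eq_sum_of_prod_X_add_C_eq a s hs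
  have hcomp : ∀ y : K⟦X⟧, P ((1 - X) * y) =
      (thetaOp K)^[d + 1] y - X * (List.ofFn fun i => shiftOp K (1 - a i)).foldr (· ∘ ·) id y := by
    intro y
    have hqy : ∀ j ∈ Finset.range (d + 1),
        q j * ((1 - X) * y) = -(C (s (d + 1 - j)) * (X * y)) := by
      intro j hj
      have hjd : j ≤ d := Nat.lt_succ_iff.mp (Finset.mem_range.mp hj)
      rw [hq j hjd, ← Nat.sub_add_comm hjd]
      linear_combination (-(C (s (d + 1 - j)) * X * y)) * hinv
    have hshift : X * (List.ofFn fun i => shiftOp K (1 - a i)).foldr (· ∘ ·) id y =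
        (List.ofFn fun i => shiftOp K (-a i)).foldr (· ∘ ·) id (X * y) := by
      simp only [foldr_shiftOp_X_mul, neg_add_eq_sub]
    rw [hP, Finset.sum_congr rfl fun j hj => by rw [hqy j hj], hshift,
      foldr_shiftOp_eq_sum _ _ hsymbol, Finset.sum_range_succ _ (d + 1)]
    ext n
    simp only [map_add, map_sub, map_sum, map_smul, map_neg, coeff_thetaOp_iterate, smul_eq_mul,
      coeff_C_mul, mul_neg, Finset.sum_neg_distrib, sub_mul, one_mul, tsub_self, pow_zero, hs0]
    ring_nf
  exact ⟨hcomp, by rw [hcomp, thetaOp_iterate_hgSeries, sub_self]⟩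
end

section
/- In the setting of a ℚ-algebra R with derivation ∂, modules M, N with compatible connections D, and a pairing Q with ∂Q(x,y) = Q(Dx,y)+Q(x,Dy), suppose Q(D^iω, D^jω̌) = 0 for all i+j < d, i,j ≥ 0. Then (d+1)·∂(Q(ω, D^d ω̌)) = (−1)^d Q(D^{d+1}ω, ω̌) + Q(ω, D^{d+1}ω̌). -/
/-!
Write `a i j = Q (D^i ω) (D^j ωc)`, so that `∂ (a i j) = a (i + 1) j + a i (j + 1)`.
Applying `∂` to the vanishing entries on the antidiagonal `i + j = d - 1` gives
`a i (d - i) = (-1)^i a 0 d`. Applying `∂` once more, `(d + 1) ∂ (a 0 d)` is the alternating sum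
of `a (i + 1) (d - i) + a i (d + 1 - i)` over `i ≤ d`, which telescopes to its two end terms.
-/

open Finset

section
variable {R : Type*} [CommRing R]

lemma map_neg_one_pow_mul {F : Type*} [FunLike F R R] [AddMonoidHomClass F R R] (δ : F)
    (n : ℕ) (x : R) : δ ((-1) ^ n * x) = (-1) ^ n * δ x := by
  rcases neg_one_pow_eq_or R n with h | h <;> simp [h]

lemma antidiagonal_eq_neg_one_pow_mul {a : ℕ → ℕ → R} {d : ℕ}
    (h : ∀ i j, i + j + 1 = d → a (i + 1) j + a i (j + 1) = 0) :
    ∀ i ≤ d, a i (d - i) = (-1) ^ i * a 0 d := by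
  intro i
  induction i with
  | zero => simp
  | succ i ih =>
    intro hi
    have hstep := h i (d - (i + 1)) (by omega)
    rw [show d - (i + 1) + 1 = d - i by omega, ih (by omega)] at hstep
    rw [pow_succ]
    linear_combination hstep

theorem succ_nsmul_map_eq_of_vanishing {F : Type*} [FunLike F R R] [AddMonoidHomClass F R R]
    (δ : F) {a : ℕ → ℕ → R} {d : ℕ}
    (hδ : ∀ i j, δ (a i j) = a (i + 1) j + a i (j + 1))
    (hvan : ∀ i j, i + j < d → a i j = 0) :
    (d + 1) • δ (a 0 d) = (-1) ^ d * a (d + 1) 0 + a 0 (d + 1) := by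
  have hanti := antidiagonal_eq_neg_one_pow_mul (a := a) (d := d) fun i j hij => by
    rw [← hδ, hvan i j (by omega), map_zero]
  set f : ℕ → R := fun i => (-1) ^ i * a i (d + 1 - i)
  calc (d + 1) • δ (a 0 d) = ∑ i ∈ range (d + 1), (-1) ^ i * δ (a i (d - i)) := by
        rw [sum_congr rfl fun i hi => ?_, sum_const, card_range]
        rw [hanti i (by simpa [Nat.lt_succ_iff] using hi), map_neg_one_pow_mul, ← mul_assoc,
          ← mul_pow, neg_one_mul, neg_neg, one_pow, one_mul]
    _ = ∑ i ∈ range (d + 1), (f i - f (i + 1)) := by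
        refine sum_congr rfl fun i hi => ?_
        have hi : i ≤ d := by simpa [Nat.lt_succ_iff] using hi
        simp only [f, hδ, pow_succ, show d - i + 1 = d + 1 - i by omega,
          show d + 1 - (i + 1) = d - i by omega]
        ring
    _ = (-1) ^ d * a (d + 1) 0 + a 0 (d + 1) := by
        rw [sum_range_sub']
        simp only [f, pow_zero, one_mul, Nat.sub_self, Nat.sub_zero, pow_succ]
        ring

end

theorem pairing_alternating_sum_general
    (R : Type*) [CommRing R] [Algebra ℚ R] (del : Derivation ℚ R R)
    (M N : Type*) [AddCommGroup M] [Module R M] [AddCommGroup N] [Module R N]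
    (DM : M → M) (DN : N → N)
    (Q : M →ₗ[R] N →ₗ[R] R)
    (hQ : ∀ (x : M) (y : N), del (Q x y) = Q (DM x) y + Q x (DN y))
    (d : ℕ) (ω : M) (ωc : N)
    (hvan : ∀ i j : ℕ, i + j < d → Q (DM^[i] ω) (DN^[j] ωc) = 0) :
    (d + 1 : ℕ) • del (Q ω (DN^[d] ωc)) =
      (-1 : R) ^ d * Q (DM^[d + 1] ω) ωc + Q ω (DN^[d + 1] ωc) :=
  succ_nsmul_map_eq_of_vanishing del (a := fun i j => Q (DM^[i] ω) (DN^[j] ωc))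
    (fun i j => by simp only [Function.iterate_succ_apply', hQ]) hvan

/-- In the setting of a `ℚ`-algebra `R` with derivation `del`,
modules with compatible connections and pairing `Q` with
`delQ(x,y) = Q(Dx,y) + Q(x,Dy)`, if `Q(D^iω, D^jωc) = 0` for all `i+j < d`, then
`(d+1)·del(Q(ω, D^d ωc)) = (−1)^d Q(D^{d+1}ω, ωc) + Q(ω, D^{d+1}ωc)`. -/
theorem pairing_alternating_sum
    (R : Type*) [CommRing R] [Algebra ℚ R] (del : Derivation ℚ R R)
    (M N : Type*) [AddCommGroup M] [Module R M] [AddCommGroup N] [Module R N]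
    (DM : M → M) (DN : N → N)
    (hDMadd : ∀ x y : M, DM (x + y) = DM x + DM y)
    (hDNadd : ∀ x y : N, DN (x + y) = DN x + DN y)
    (hDMleib : ∀ (r : R) (x : M), DM (r • x) = del r • x + r • DM x)
    (hDNleib : ∀ (r : R) (y : N), DN (r • y) = del r • y + r • DN y)
    (Q : M →ₗ[R] N →ₗ[R] R)
    (hQ : ∀ (x : M) (y : N), del (Q x y) = Q (DM x) y + Q x (DN y))
    (d : ℕ) (ω : M) (ωc : N)
    (hvan : ∀ i j : ℕ, i + j < d → Q (DM^[i] ω) (DN^[j] ωc) = 0) :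
    (d + 1 : ℕ) • del (Q ω (DN^[d] ωc)) =
      (-1 : R) ^ d * Q (DM^[d + 1] ω) ωc + Q ω (DN^[d + 1] ωc) :=
  pairing_alternating_sum_general R del M N DM DN Q hQ d ω ωc hvan
end

section
/- Let K be a field of characteristic zero, A = K[t, (t−t²)^{−1}], D = t·d/dt. Let a_0,…,a_d ∈ K with Σa_i =: s, and let M, N be A-modules with connections and Q a D-compatible A-bilinear pairing as above. Suppose ω ∈ M, ω̌ ∈ N satisfy the hypergeometric equations D^{d+1}ω = t(D+a_0)⋯(D+a_d)ω and D^{d+1}ω̌ = t(D+1−a_0)⋯(D+1−a_d)ω̌, and Q(D^iω, D^jω̌) = 0 for i+j < d. Then q(t) := Q(ω, D^dω̌) ∈ A satisfies the differential equation dq/dt = q/(1−t); hence if q ∈ K[t,(t−t²)^{−1}] then q = C·(1−t)^{−1} for some constant C ∈ K. -/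
/-!
Write `δ = t·d/dt` and `P i j = Q(Dⁱω, Dʲω̌)`. Compatibility of `Q` with the connections
gives `δ P i j = P (i+1) j + P i (j+1)`, so the vanishing of `P` below the antidiagonal `i + j = d`
forces `P i j = (-1)ⁱ q` on it and determines the next antidiagonal in terms of `q`, `P 0 (d+1)`
and `δ q`. Pairing the two hypergeometric equations with `ω̌` and `ω` respectively expresses
`P (d+1) 0` and `P 0 (d+1)` through `q` as well (the lower-order terms pair to zero); since the
two parameter sums add up to `d + 1`, eliminating them leaves `(1 - t)·dq/dt = q`. Then
`(1 - t)·q` has derivative zero, hence is a constant.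
-/

open Polynomial

section IterateSpan

variable {R M : Type*} [CommRing R] [AddCommGroup M] [Module R M]

variable (R) in
def iterateSpan (D : M → M) (ω : M) (m : ℕ) : Submodule R M :=
  Submodule.span R ((fun k => D^[k] ω) '' Set.Iio m)

variable {D : M → M} {ω : M}

theorem iterate_mem_iterateSpan {k m : ℕ} (hk : k < m) : D^[k] ω ∈ iterateSpan R D ω m :=
  Submodule.subset_span ⟨k, hk, rfl⟩

theorem iterateSpan_mono {m m' : ℕ} (h : m ≤ m') :
    iterateSpan R D ω m ≤ iterateSpan R D ω m' :=
  Submodule.span_mono (Set.image_mono (Set.Iio_subset_Iio h))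

theorem apply_mem_iterateSpan_succ (ε : R → R) (hadd : ∀ x y, D (x + y) = D x + D y)
    (hleib : ∀ (r : R) (x : M), D (r • x) = ε r • x + r • D x) {m : ℕ} {v : M}
    (hv : v ∈ iterateSpan R D ω m) : D v ∈ iterateSpan R D ω (m + 1) := by
  induction hv using Submodule.span_induction with
  | mem x hx =>
    obtain ⟨k, hk, rfl⟩ := hx
    rw [← Function.iterate_succ_apply' D k ω]
    exact iterate_mem_iterateSpan (Nat.succ_lt_succ hk)
  | zero =>
    have h0 : D 0 = 0 := by simpa using hadd 0 0
    rw [h0]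
    exact zero_mem _
  | add x y _ _ hx hy => rw [hadd]; exact add_mem hx hy
  | smul r x hx ih =>
    rw [hleib]
    exact add_mem (Submodule.smul_mem _ _ (iterateSpan_mono m.le_succ hx))
      (Submodule.smul_mem _ _ ih)

theorem map_eq_zero_of_mem_iterateSpan {P : Type*} [AddCommGroup P] [Module R P]
    (f : M →ₗ[R] P) {m : ℕ} (hf : ∀ k < m, f (D^[k] ω) = 0) {w : M}
    (hw : w ∈ iterateSpan R D ω m) : f w = 0 := by
  suffices iterateSpan R D ω m ≤ LinearMap.ker f from this hw
  rw [iterateSpan, Submodule.span_le]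
  rintro _ ⟨k, hk, rfl⟩
  exact hf k hk

/-- `(D + c₀) ∘ ⋯ ∘ (D + c_m)` applied to `ω` is `D^{m+1} ω + (Σ cᵢ) D^m ω` modulo lower
iterates. -/
theorem exists_mem_iterateSpan_foldr_add_smul_eq {K : Type*} [CommRing K] [Algebra K R]
    (δ : Derivation K R R) (hadd : ∀ x y, D (x + y) = D x + D y)
    (hleib : ∀ (r : R) (x : M), D (r • x) = δ r • x + r • D x) :
    ∀ (m : ℕ) (c : List K), c.length = m + 1 →
      ∃ w ∈ iterateSpan R D ω m,
        ((c.map fun r v => D v + algebraMap K R r • v).foldr (· ∘ ·) id) ω =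
          D^[m + 1] ω + algebraMap K R c.sum • D^[m] ω + w := by
  intro m
  induction m with
  | zero =>
    rintro (_ | ⟨r, _ | _⟩) hc <;> simp at hc
    exact ⟨0, zero_mem _, by simp⟩
  | succ m ih =>
    rintro (_ | ⟨r, c⟩) hc
    · simp at hc
    obtain ⟨w, hw, hexp⟩ := ih c (by simpa using hc)
    refine ⟨(algebraMap K R r * algebraMap K R c.sum) • D^[m] ω + D w + algebraMap K R r • w,
      add_mem (add_mem ?_ ?_) ?_, ?_⟩
    · exact Submodule.smul_mem _ _ (iterate_mem_iterateSpan m.lt_succ_self)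
    · exact apply_mem_iterateSpan_succ δ hadd hleib hw
    · exact Submodule.smul_mem _ _ (iterateSpan_mono m.le_succ hw)
    · simp only [List.map_cons, List.foldr_cons, Function.comp_apply, hexp, hadd, hleib,
        Derivation.map_algebraMap, zero_smul, zero_add, ← Function.iterate_succ_apply' D,
        List.sum_cons, map_add, add_smul, smul_add, smul_smul]
      abel

end IterateSpan

section Antidiagonal

variable {R F : Type*} [CommRing R] [FunLike F R R] [AddMonoidHomClass F R R] {δ : F}
  {P : ℕ → ℕ → R} {d : ℕ}

theorem eq_neg_one_pow_mul_of_add_eq (hP : ∀ i j, δ (P i j) = P (i + 1) j + P i (j + 1))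
    (hvan : ∀ i j, i + j < d → P i j = 0) :
    ∀ i j, i + j = d → P i j = (-1) ^ i * P 0 d := by
  intro i
  induction i with
  | zero => rintro j rfl; simp
  | succ i ih =>
    intro j hij
    have h := hP i j
    rw [hvan i j (by omega), map_zero] at h
    linear_combination -h - ih (j + 1) (by omega)

theorem eq_neg_one_pow_mul_of_add_eq_succ (hP : ∀ i j, δ (P i j) = P (i + 1) j + P i (j + 1))
    (hvan : ∀ i j, i + j < d → P i j = 0) :
    ∀ i j, i + j = d + 1 → P i j = (-1) ^ i * (P 0 (d + 1) - i * δ (P 0 d)) := by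
  intro i
  induction i with
  | zero =>
    intro j hj
    obtain rfl : j = d + 1 := by omega
    simp
  | succ i ih =>
    intro j hij
    have h := hP i j
    have hsign : δ ((-1) ^ i * P 0 d) = (-1) ^ i * δ (P 0 d) := by
      rcases neg_one_pow_eq_or R i with h | h <;> simp [h]
    rw [eq_neg_one_pow_mul_of_add_eq hP hvan i j (by omega), hsign] at h
    push_cast
    linear_combination -h - ih (j + 1) (by omega)

end Antidiagonal

section Hypergeometric

variable {K R M N : Type*} [CommRing K] [CommRing R] [Algebra K R]
  [AddCommGroup M] [Module R M] [AddCommGroup N] [Module R N]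

theorem foldr_ofFn_eq_foldr_map_ofFn {n : ℕ} (D : M → M) (a : Fin n → K) :
    (List.ofFn fun i => fun v : M => D v + algebraMap K R (a i) • v).foldr (· ∘ ·) id =
      ((List.ofFn a).map fun r v => D v + algebraMap K R r • v).foldr (· ∘ ·) id := by
  rw [List.map_ofFn]; rfl

theorem one_sub_mul_derivation_pairing_eq [NoZeroDivisors R] [CharZero R]
    (δ : Derivation K R R) (t : R) (d : ℕ) (a : Fin (d + 1) → K)
    (DM : M → M) (DN : N → N)
    (hDMadd : ∀ x y, DM (x + y) = DM x + DM y) (hDNadd : ∀ x y, DN (x + y) = DN x + DN y)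
    (hDMleib : ∀ (r : R) (x : M), DM (r • x) = δ r • x + r • DM x)
    (hDNleib : ∀ (r : R) (y : N), DN (r • y) = δ r • y + r • DN y)
    (Q : M →ₗ[R] N →ₗ[R] R) (hQ : ∀ x y, δ (Q x y) = Q (DM x) y + Q x (DN y))
    (ω : M) (ωc : N)
    (hω : DM^[d + 1] ω = t • ((List.ofFn fun i : Fin (d + 1) =>
      fun v : M => DM v + algebraMap K R (a i) • v).foldr (· ∘ ·) id) ω)
    (hωc : DN^[d + 1] ωc = t • ((List.ofFn fun i : Fin (d + 1) =>
      fun v : N => DN v + algebraMap K R (1 - a i) • v).foldr (· ∘ ·) id) ωc)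
    (hvan : ∀ i j, i + j < d → Q (DM^[i] ω) (DN^[j] ωc) = 0) :
    (1 - t) * δ (Q ω (DN^[d] ωc)) = t * Q ω (DN^[d] ωc) := by
  set P : ℕ → ℕ → R := fun i j => Q (DM^[i] ω) (DN^[j] ωc)
  have hP : ∀ i j, δ (P i j) = P (i + 1) j + P i (j + 1) := fun i j => by
    simp only [P, Function.iterate_succ_apply', hQ]
  obtain ⟨w, hw, hexp⟩ := exists_mem_iterateSpan_foldr_add_smul_eq δ hDMadd hDMleib
    (ω := ω) d (List.ofFn a) (by simp)
  obtain ⟨wc, hwc, hexpc⟩ := exists_mem_iterateSpan_foldr_add_smul_eq δ hDNadd hDNleib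
    (ω := ωc) d (List.ofFn fun i => 1 - a i) (by simp)
  have hw0 : Q w ωc = 0 :=
    map_eq_zero_of_mem_iterateSpan (Q.flip ωc) (fun k hk => hvan k 0 (by omega)) hw
  have hwc0 : Q ω wc = 0 :=
    map_eq_zero_of_mem_iterateSpan (Q ω) (fun k hk => hvan 0 k (by omega)) hwc
  have hM : P (d + 1) 0 = t * (P (d + 1) 0 + algebraMap K R (List.ofFn a).sum * P d 0) := by
    have h := congrArg (Q · ωc) hω
    rw [foldr_ofFn_eq_foldr_map_ofFn, hexp] at h
    simp only [map_add, map_smul, LinearMap.add_apply, LinearMap.smul_apply, smul_eq_mul, hw0,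
      add_zero] at h
    exact h
  have hN : P 0 (d + 1) =
      t * (P 0 (d + 1) + algebraMap K R (List.ofFn fun i => 1 - a i).sum * P 0 d) := by
    have h := congrArg (Q ω) hωc
    rw [foldr_ofFn_eq_foldr_map_ofFn, hexpc] at h
    simp only [map_add, map_smul, smul_eq_mul, hwc0, add_zero] at h
    exact h
  have hsum : algebraMap K R (List.ofFn a).sum + algebraMap K R (List.ofFn fun i => 1 - a i).sum =
      d + 1 := by
    rw [← map_add, List.sum_ofFn, List.sum_ofFn, ← Finset.sum_add_distrib]
    simp
  have hd0 := eq_neg_one_pow_mul_of_add_eq hP hvan d 0 (by omega)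
  have hd1 := eq_neg_one_pow_mul_of_add_eq_succ hP hvan (d + 1) 0 (by omega)
  have hsq : ((-1 : R) ^ d) * (-1) ^ d = 1 := by rw [← mul_pow]; simp
  have hq : ((d + 1 : ℕ) : R) * ((1 - t) * δ (P 0 d) - t * P 0 d) = 0 := by
    rw [hd0, hd1] at hM
    push_cast at hM ⊢
    linear_combination (-1) ^ d * hM + hN + t * P 0 d * hsum + ((1 - t) * (P 0 (d + 1) -
      (d + 1) * δ (P 0 d)) + t * algebraMap K R (List.ofFn a).sum * P 0 d) * hsq
  exact sub_eq_zero.mp ((mul_eq_zero.mp hq).resolve_left (Nat.cast_ne_zero.mpr d.succ_ne_zero))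

end Hypergeometric

namespace RatFunc

variable {K : Type*} [Field K]

theorem derivation_algebraMap_polynomial (del : Derivation K (RatFunc K) (RatFunc K))
    (hdel : del X = 1) (p : K[X]) :
    del (algebraMap K[X] (RatFunc K) p) = algebraMap K[X] (RatFunc K) (derivative p) := by
  have h : del.compAlgebraMap K[X] = Polynomial.mkDerivation K (1 : RatFunc K) :=
    Polynomial.derivation_ext (by simp [algebraMap_X, hdel])
  simpa [Polynomial.mkDerivation_apply, Algebra.smul_def] using DFunLike.congr_fun h p

theorem num_mul_derivative_denom_of_derivation_eq_zero
    (del : Derivation K (RatFunc K) (RatFunc K)) (hdel : del X = 1) {f : RatFunc K}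
    (hf : del f = 0) : f.num * derivative f.denom = derivative f.num * f.denom := by
  have hfrac : f * algebraMap K[X] (RatFunc K) f.denom = algebraMap K[X] (RatFunc K) f.num :=
    ((div_eq_iff (algebraMap_ne_zero f.denom_ne_zero)).mp (num_div_denom f)).symm
  have hderiv : f * algebraMap K[X] (RatFunc K) (derivative f.denom) =
      algebraMap K[X] (RatFunc K) (derivative f.num) := by
    simpa [derivation_algebraMap_polynomial del hdel, hf] using congrArg del hfrac
  apply algebraMap_injective K
  rw [map_mul, map_mul, ← hfrac, ← hderiv]
  ring

theorem exists_eq_algebraMap_of_derivation_eq_zero [CharZero K]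
    (del : Derivation K (RatFunc K) (RatFunc K)) (hdel : del X = 1) {f : RatFunc K}
    (hf : del f = 0) : ∃ C : K, f = algebraMap K (RatFunc K) C := by
  have hrel := num_mul_derivative_denom_of_derivation_eq_zero del hdel hf
  have hdvd : f.denom ∣ derivative f.denom :=
    (isCoprime_num_denom f).symm.dvd_of_dvd_mul_left (hrel ▸ dvd_mul_left _ _)
  have hdenom' : derivative f.denom = 0 :=
    eq_zero_of_dvd_of_degree_lt hdvd (degree_derivative_lt f.denom_ne_zero)
  have hdenom : f.denom = 1 :=
    (monic_denom f).natDegree_eq_zero.mp (derivative_eq_zero.mp hdenom')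
  have hnum : derivative f.num = 0 := by simpa [hdenom', hdenom] using hrel.symm
  refine ⟨f.num.coeff 0, ?_⟩
  conv_lhs => rw [← num_div_denom f, hdenom, eq_C_of_derivative_eq_zero hnum]
  simp [algebraMap_eq_C]

theorem exists_eq_algebraMap_mul_inv_one_sub_X [CharZero K]
    (del : Derivation K (RatFunc K) (RatFunc K)) (hdel : del X = 1) {q : RatFunc K}
    (hq : (1 - X) * del q = q) : ∃ C : K, q = algebraMap K (RatFunc K) C * (1 - X)⁻¹ := by
  have hconst : del ((1 - X) * q) = 0 := by
    rw [Derivation.leibniz, smul_eq_mul, smul_eq_mul, map_sub, Derivation.map_one_eq_zero, hdel]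
    linear_combination hq
  have h1X : (1 - X : RatFunc K) ≠ 0 := by
    have h : (1 - X : RatFunc K) =
        -algebraMap K[X] (RatFunc K) (Polynomial.X - Polynomial.C 1) := by
      simp [algebraMap_X]
    rw [h, neg_ne_zero]
    exact algebraMap_ne_zero (X_sub_C_ne_zero 1)
  obtain ⟨C, hC⟩ := exists_eq_algebraMap_of_derivation_eq_zero del hdel hconst
  exact ⟨C, by rw [← hC]; field_simp⟩

end RatFunc

/-- Work in `K(t)` (formalizing `A = K[t,(t−t²)⁻¹] ⊂ K(t)`), with
`del` the derivation `d/dt` (`del t = 1`) and `D = t·d/dt`. Given modules `M`, `N`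
with connections and a `D`-compatible pairing `Q`, if `ω`, `ω̌` satisfy the
hypergeometric equations `D^{d+1}ω = t(D+a₀)⋯(D+a_d)ω`,
`D^{d+1}ω̌ = t(D+1−a₀)⋯(D+1−a_d)ω̌` and `Q(D^iω, D^jω̌) = 0` for `i+j < d`, then
`q := Q(ω, D^dω̌)` satisfies `(1−t)·dq/dt = q`; hence if `q ∈ K[t,(t−t²)⁻¹]` then
`q = C·(1−t)⁻¹` for some constant `C ∈ K`. -/
theorem pairing_with_unit_root_is_constant
    (K : Type*) [Field K] [CharZero K]
    (del : Derivation K (RatFunc K) (RatFunc K)) (hdel : del RatFunc.X = 1)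
    (d : ℕ) (a : Fin (d + 1) → K)
    (M N : Type*) [AddCommGroup M] [Module (RatFunc K) M]
    [AddCommGroup N] [Module (RatFunc K) N]
    (DM : M → M) (DN : N → N)
    (hDMadd : ∀ x y : M, DM (x + y) = DM x + DM y)
    (hDNadd : ∀ x y : N, DN (x + y) = DN x + DN y)
    (hDMleib : ∀ (r : RatFunc K) (x : M), DM (r • x) = (RatFunc.X * del r) • x + r • DM x)
    (hDNleib : ∀ (r : RatFunc K) (y : N), DN (r • y) = (RatFunc.X * del r) • y + r • DN y)
    (Q : M →ₗ[RatFunc K] N →ₗ[RatFunc K] RatFunc K)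
    (hQ : ∀ (x : M) (y : N),
      RatFunc.X * del (Q x y) = Q (DM x) y + Q x (DN y))
    (ω : M) (ωc : N)
    (hω : DM^[d + 1] ω = (RatFunc.X : RatFunc K) •
      ((List.ofFn fun i : Fin (d + 1) =>
        fun v : M => DM v + (algebraMap K (RatFunc K) (a i)) • v).foldr (· ∘ ·) id) ω)
    (hωc : DN^[d + 1] ωc = (RatFunc.X : RatFunc K) •
      ((List.ofFn fun i : Fin (d + 1) =>
        fun v : N => DN v + (algebraMap K (RatFunc K) (1 - a i)) • v).foldr (· ∘ ·) id) ωc)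
    (hvan : ∀ i j : ℕ, i + j < d → Q (DM^[i] ω) (DN^[j] ωc) = 0) :
    (1 - RatFunc.X) * del (Q ω (DN^[d] ωc)) = Q ω (DN^[d] ωc) ∧
    (Q ω (DN^[d] ωc) ∈
        Algebra.adjoin K {RatFunc.X, (RatFunc.X - RatFunc.X ^ 2)⁻¹} →
      ∃ C : K, Q ω (DN^[d] ωc) =
        algebraMap K (RatFunc K) C * (1 - RatFunc.X)⁻¹) := by
  have hδ : ∀ r, RatFunc.X * del r = (RatFunc.X • del) r := fun _ => by
    rw [Derivation.smul_apply, smul_eq_mul]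
  simp only [hδ] at hDMleib hDNleib hQ
  have hode := one_sub_mul_derivation_pairing_eq _ _ d a DM DN hDMadd hDNadd hDMleib hDNleib
    Q hQ ω ωc hω hωc hvan
  rw [← hδ] at hode
  have hmain : (1 - RatFunc.X) * del (Q ω (DN^[d] ωc)) = Q ω (DN^[d] ωc) :=
    mul_left_cancel₀ RatFunc.X_ne_zero (by linear_combination hode)
  exact ⟨hmain, fun _ => RatFunc.exists_eq_algebraMap_mul_inv_one_sub_X del hdel hmain⟩
end

section
/- Let A be an integral domain, d ≥ 1, n_0,…,n_d ≥ 2 integers with n_0⋯n_d invertible in A, and t ∈ A with t(1−t) ∈ A^×. Then the affine scheme U = Spec A[x_0,…,x_d]/((1−x_0^{n_0})⋯(1−x_d^{n_d}) − t) is smooth over A. -/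
/-!
Over any base ring `R`, a hypersurface `f = 0` in affine space is smooth as soon as `f` and its
partial derivatives generate the unit ideal: writing `1 = a f + ∑ cᵢ ∂ᵢf`, the derivation
`∑ cᵢ ∂ᵢ` sends `f` to `1` modulo `f`, which splits the conormal map `(f)/(f²) → S ⊗ Ω`.

For `f = ∏ (1 - xᵢ^{nᵢ}) - t` put `yᵢ = xᵢ^{nᵢ}`. Since `xᵢ ∂ᵢf = -nᵢ yᵢ ∏_{j≠i} (1 - yⱼ)` and `nᵢ`
is a unit, modulo `(f, ∂f)` we get `t yᵢ = (1 - yᵢ) · yᵢ ∏_{j≠i} (1 - yⱼ) = 0`; as `t` is a unit,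
every `yᵢ` vanishes, so `t = ∏ (1 - yᵢ) = 1`, which is impossible as `1 - t` is a unit.
-/

open MvPolynomial Finset

theorem Algebra.FormallySmooth.quotient_span_singleton_of_derivation {R P : Type*} [CommRing R]
    [CommRing P] [Algebra R P] [Algebra.FormallySmooth R P] (f : P)
    (D : Derivation R P (P ⧸ Ideal.span {f})) (hD : D f = 1) :
    Algebra.FormallySmooth R (P ⧸ Ideal.span {f}) := by
  set K := RingHom.ker (algebraMap P (P ⧸ Ideal.span {f}))
  have hK : K = Ideal.span {f} := Ideal.mk_ker
  have hfK : f ∈ K := hK ▸ Ideal.mem_span_singleton_self f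
  let μ : (P ⧸ Ideal.span {f}) →ₗ[P] K.Cotangent :=
    Submodule.liftQ _ (LinearMap.toSpanSingleton P _ (K.toCotangent ⟨f, hfK⟩))
      fun p hp => Ideal.Cotangent.smul_eq_zero_of_mem (hK ▸ hp) _
  rw [Algebra.FormallySmooth.iff_split_injection (R := R) Ideal.Quotient.mk_surjective]
  refine ⟨μ ∘ₗ (D.liftKaehlerDifferential.liftBaseChange _).restrictScalars P,
    LinearMap.ext fun x => ?_⟩
  obtain ⟨⟨p, hp⟩, rfl⟩ := K.toCotangent_surjective x
  obtain ⟨r, rfl⟩ := Ideal.mem_span_singleton'.mp (hK ▸ hp)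
  have hDp : D (r * f) = Ideal.Quotient.mk _ r := by
    rw [D.leibniz, hD, Algebra.smul_def, Algebra.smul_def]
    simp
  rw [LinearMap.comp_apply, KaehlerDifferential.kerCotangentToTensor_toCotangent]
  simp only [LinearMap.comp_apply, LinearMap.id_apply, LinearMap.restrictScalars_apply,
    LinearMap.liftBaseChange_tmul, Derivation.liftKaehlerDifferential_comp_D, one_smul, hDp]
  exact (map_smul K.toCotangent r ⟨f, hfK⟩).symm

theorem MvPolynomial.smooth_quotient_span_singleton_of_span_pderiv_eq_top {R σ : Type*}
    [CommRing R] [Fintype σ] (f : MvPolynomial σ R)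
    (hf : Ideal.span (insert f (Set.range fun i => pderiv i f)) = ⊤) :
    Algebra.Smooth R (MvPolynomial σ R ⧸ Ideal.span {f}) := by
  obtain ⟨a, z, hz, h1⟩ := Ideal.mem_span_insert.mp (hf ▸ Submodule.mem_top (x := 1))
  obtain ⟨c, rfl⟩ := Ideal.mem_span_range_iff_exists_fun.mp hz
  let D : Derivation R (MvPolynomial σ R) (MvPolynomial σ R) := ∑ i, c i • pderiv i
  have hD : D f = 1 - a * f := by
    rw [h1, add_sub_cancel_left, ← Derivation.coeFnAddMonoidHom_apply, map_sum,
      Finset.sum_apply]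
    rfl
  refine ⟨Algebra.FormallySmooth.quotient_span_singleton_of_derivation f
    ((Algebra.linearMap _ _).compDer D) ?_, Algebra.FinitePresentation.quotient
      (Submodule.fg_span (Set.finite_singleton f))⟩
  simp [hD]

theorem Derivation.map_prod_eq_zero {R A M ι : Type*} [CommSemiring R] [CommSemiring A]
    [AddCommMonoid M] [Algebra R A] [Module A M] [Module R M] (D : Derivation R A M)
    (s : Finset ι) (g : ι → A) (h : ∀ j ∈ s, D (g j) = 0) : D (∏ j ∈ s, g j) = 0 :=
  Finset.prod_induction g (fun x => D x = 0)
    (fun a b ha hb => by rw [D.leibniz, ha, hb, smul_zero, smul_zero, add_zero])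
    D.map_one_eq_zero h

theorem subsingleton_of_prod_one_sub_eq_of_mul_prod_erase_eq_zero {Q ι : Type*} [CommRing Q]
    [Fintype ι] [DecidableEq ι] (y : ι → Q) (t : Q) (hprod : ∏ i, (1 - y i) = t)
    (hcrit : ∀ i, y i * ∏ j ∈ univ.erase i, (1 - y j) = 0) (ht : IsUnit t)
    (h1t : IsUnit (1 - t)) : Subsingleton Q := by
  have hy : ∀ i, y i = 0 := fun i => ht.mul_right_eq_zero.mp <| by
    rw [← hprod, ← mul_prod_erase univ _ (mem_univ i)]
    linear_combination (1 - y i) * hcrit i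
  have ht1 : t = 1 := by simp [← hprod, hy]
  rw [ht1, sub_self, isUnit_zero_iff] at h1t
  exact subsingleton_of_zero_eq_one h1t

noncomputable def hypergeometricPoly {R ι : Type*} [CommRing R] [Fintype ι] (n : ι → ℕ) (t : R) :
    MvPolynomial ι R :=
  ∏ i, (1 - X i ^ n i) - C t

theorem X_mul_pderiv_hypergeometricPoly {R ι : Type*} [CommRing R] [Fintype ι] [DecidableEq ι]
    (n : ι → ℕ) (t : R) (i : ι) :
    X i * pderiv i (hypergeometricPoly n t) =
      -((n i : MvPolynomial ι R) * (X i ^ n i * ∏ j ∈ univ.erase i, (1 - X j ^ n j))) := by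
  have hrest : pderiv i (∏ j ∈ univ.erase i, (1 - X j ^ n j) : MvPolynomial ι R) = 0 :=
    (pderiv i).map_prod_eq_zero _ _ fun j hj => by
      rw [map_sub, pderiv_one, pderiv_pow, pderiv_X_of_ne (ne_of_mem_erase hj)]
      simp
  rw [hypergeometricPoly, ← mul_prod_erase univ _ (mem_univ i), map_sub, pderiv_C, pderiv_mul,
    hrest, map_sub, pderiv_one, pderiv_pow, pderiv_X_self]
  cases n i with
  | zero => simp
  | succ k => simp only [Nat.cast_succ, Nat.add_sub_cancel]; ring

theorem span_hypergeometricPoly_pderiv_eq_top {R ι : Type*} [CommRing R] [Fintype ι]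
    {n : ι → ℕ} (hn : ∀ i, IsUnit (n i : R)) {t : R} (ht : IsUnit t) (h1t : IsUnit (1 - t)) :
    Ideal.span (insert (hypergeometricPoly n t)
      (Set.range fun i => pderiv i (hypergeometricPoly n t))) = ⊤ := by
  classical
  set J := Ideal.span (insert (hypergeometricPoly n t)
      (Set.range fun i => pderiv i (hypergeometricPoly n t)))
  have hf : Ideal.Quotient.mk J (hypergeometricPoly n t) = 0 :=
    Ideal.Quotient.eq_zero_iff_mem.mpr (Ideal.subset_span (Set.mem_insert _ _))
  have hpderiv (i : ι) : Ideal.Quotient.mk J (pderiv i (hypergeometricPoly n t)) = 0 :=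
    Ideal.Quotient.eq_zero_iff_mem.mpr (Ideal.subset_span (Set.mem_insert_of_mem _ ⟨i, rfl⟩))
  rw [← Ideal.Quotient.subsingleton_iff]
  refine subsingleton_of_prod_one_sub_eq_of_mul_prod_erase_eq_zero
    (fun i => Ideal.Quotient.mk J (X i ^ n i)) (Ideal.Quotient.mk J (C t)) ?_ (fun i => ?_)
    (ht.map ((Ideal.Quotient.mk J).comp C))
    (by simpa using h1t.map ((Ideal.Quotient.mk J).comp C))
  · rw [hypergeometricPoly, map_sub, sub_eq_zero] at hf
    simpa using hf
  · have hu : IsUnit (n i : MvPolynomial ι R ⧸ J) := by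
      simpa using (hn i).map (algebraMap R (MvPolynomial ι R ⧸ J))
    have := congrArg (Ideal.Quotient.mk J) (X_mul_pderiv_hypergeometricPoly n t i)
    rw [map_mul, hpderiv, mul_zero, map_neg, map_mul, map_natCast, eq_comm, neg_eq_zero,
      hu.mul_right_eq_zero] at this
    simpa using this

theorem hypergeometric_scheme_smooth_general
    (A : Type*) [CommRing A]
    (d : ℕ) (n : Fin (d + 1) → ℕ)
    (hninv : IsUnit ((∏ i : Fin (d + 1), n i : ℕ) : A))
    (t : A) (ht : IsUnit (t * (1 - t))) :
    Algebra.Smooth A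
      (MvPolynomial (Fin (d + 1)) A ⧸
        Ideal.span {(∏ i : Fin (d + 1), (1 - (MvPolynomial.X i) ^ (n i))) -
          MvPolynomial.C t}) := by
  have hn (i : Fin (d + 1)) : IsUnit (n i : A) :=
    isUnit_of_dvd_unit (Nat.cast_dvd_cast (dvd_prod_of_mem n (mem_univ i))) hninv
  exact smooth_quotient_span_singleton_of_span_pderiv_eq_top (hypergeometricPoly n t)
    (span_hypergeometricPoly_pderiv_eq_top hn (isUnit_of_mul_isUnit_left ht)
      (isUnit_of_mul_isUnit_right ht))

/-- Let `A` be an integral domain, `d ≥ 1`, `n₀,…,n_d ≥ 2` with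
`n₀⋯n_d` invertible in `A`, and `t ∈ A` with `t(1−t) ∈ A^×`. Then the hypergeometric
scheme `U = Spec A[x₀,…,x_d]/((1−x₀^{n₀})⋯(1−x_d^{n_d}) − t)` is smooth over `A`. -/
theorem hypergeometric_scheme_smooth
    (A : Type*) [CommRing A] [IsDomain A]
    (d : ℕ) (hd : 1 ≤ d) (n : Fin (d + 1) → ℕ) (hn : ∀ i, 2 ≤ n i)
    (hninv : IsUnit ((∏ i : Fin (d + 1), n i : ℕ) : A))
    (t : A) (ht : IsUnit (t * (1 - t))) :
    Algebra.Smooth A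
      (MvPolynomial (Fin (d + 1)) A ⧸
        Ideal.span {(∏ i : Fin (d + 1), (1 - (MvPolynomial.X i) ^ (n i))) -
          MvPolynomial.C t}) :=
  hypergeometric_scheme_smooth_general A d n hninv t ht
end
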